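/- Let (X(t))_{t≥r} be a Markov chain with X(t+1) = X(t)+1 with probability (2X(t)−1)/(2t+1) and X(t+1) = X(t) otherwise, X(r) = 1. Set Y(t) = X(t) − 1/2. Then for every positive integer ℓ, the process Y(t)(Y(t)+1)···(Y(t)+ℓ−1) / ∏_{j=0}^{ℓ−1}(2(t+j)+1), t ≥ r, is a martingale. -/

import Mathlib

/-!
With `y = X(t) - 1/2`, one step moves `y` to `y + 1` with conditional probability
`2y / (2t + 1)`. Since `y · (y + 1)^(ℓ) = (y + ℓ) · y^(ℓ)`, the conditional expectation of
`Y(t+1)^(ℓ)` is `y^(ℓ) · (2t + 2ℓ + 1) / (2t + 1)`; the same shift identity for the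
progression `2t + 1, 2t + 3, …` shows that the normalising product grows by exactly this factor.
Integrability is free because `X(r + s) ≤ s + 1`.
-/

open MeasureTheory Finset

theorem mul_prod_range_add_mul_succ {R : Type*} [CommRing R] (a d : R) (n : ℕ) :
    a * ∏ j ∈ range n, (a + d * (j + 1)) = (a + d * n) * ∏ j ∈ range n, (a + d * j) := by
  have h := (prod_range_succ' (fun j : ℕ => a + d * j) n).symm.trans (prod_range_succ _ n)
  push_cast at h
  simpa [mul_comm] using h

theorem mul_prod_two_mul_add_one_succ (τ : ℝ) (n : ℕ) :
    (2 * τ + 1) * ∏ j ∈ range n, (2 * (τ + 1 + j) + 1) =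
      (2 * τ + 2 * n + 1) * ∏ j ∈ range n, (2 * (τ + j) + 1) := by
  convert mul_prod_range_add_mul_succ (2 * τ + 1) 2 n using 2
  · exact prod_congr rfl fun j _ => by ring
  · ring
  · exact prod_congr rfl fun j _ => by ring

theorem mul_prod_sub_half_succ (x : ℝ) (n : ℕ) :
    (x - 1 / 2) * ∏ j ∈ range n, (x + 1 - 1 / 2 + j) =
      (x - 1 / 2 + n) * ∏ j ∈ range n, (x - 1 / 2 + j) := by
  convert mul_prod_range_add_mul_succ (x - 1 / 2) 1 n using 2
  · exact prod_congr rfl fun j _ => by ring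
  · ring
  · simp only [one_mul]

section
variable {Ω : Type*} {m m0 : MeasurableSpace Ω} {μ : Measure Ω}

theorem integrable_comp_natCast_of_le [IsFiniteMeasure μ] {f : ℝ → ℝ} (hf : Continuous f)
    {U : Ω → ℕ} (hU : Measurable fun ω => (U ω : ℝ)) {C : ℕ} (hUC : ∀ᵐ ω ∂μ, U ω ≤ C) :
    Integrable (fun ω => f (U ω)) μ := by
  obtain ⟨B, hB⟩ := (isCompact_Icc (a := (0 : ℝ)) (b := C)).exists_bound_of_continuousOn
    hf.continuousOn
  refine .of_bound (hf.comp_aestronglyMeasurable hU.aestronglyMeasurable) B ?_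
  filter_upwards [hUC] with ω hω
  exact hB _ ⟨Nat.cast_nonneg _, Nat.cast_le.mpr hω⟩

theorem condExp_comp_ae_eq_of_step_zero_or_one (hm : m ≤ m0) [IsFiniteMeasure μ]
    {f : ℝ → ℝ} {U V : Ω → ℝ} (hstep : ∀ᵐ ω ∂μ, V ω = U ω + 1 ∨ V ω = U ω)
    (hfU : StronglyMeasurable[m] fun ω => f (U ω))
    (hfU₁ : StronglyMeasurable[m] fun ω => f (U ω + 1))
    (hfU_int : Integrable (fun ω => f (U ω)) μ) (hfV_int : Integrable (fun ω => f (V ω)) μ)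
    (hVU_int : Integrable (V - U) μ) :
    μ[fun ω => f (V ω) | m] =ᵐ[μ]
      fun ω => f (U ω) + (f (U ω + 1) - f (U ω)) * μ[V - U | m] ω := by
  set D : Ω → ℝ := fun ω => f (U ω + 1) - f (U ω)
  -- a function of `U + δ` with `δ ∈ {0, 1}` is affine in `δ`
  have hlin : (fun ω => f (V ω)) =ᵐ[μ] (fun ω => f (U ω)) + D * (V - U) := by
    filter_upwards [hstep] with ω h
    rcases h with h | h <;> simp [D, h]
  have hD_int : Integrable (D * (V - U)) μ :=
    (hfV_int.sub hfU_int).congr (by filter_upwards [hlin] with ω h; simp [h])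
  calc μ[fun ω => f (V ω) | m]
      =ᵐ[μ] μ[(fun ω => f (U ω)) + D * (V - U) | m] := condExp_congr_ae hlin
    _ =ᵐ[μ] μ[fun ω => f (U ω) | m] + μ[D * (V - U) | m] := condExp_add hfU_int hD_int m
    _ =ᵐ[μ] (fun ω => f (U ω)) + D * μ[V - U | m] := by
      rw [condExp_of_stronglyMeasurable hm hfU hfU_int]
      exact (condExp_mul_of_stronglyMeasurable_left (hfU₁.sub hfU) hD_int hVU_int).add_left

variable {ℱ : Filtration ℕ m0} {X : ℕ → Ω → ℕ}

theorem ae_le_add_of_step {r : ℕ}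
    (hstep : ∀ t, r ≤ t → ∀ᵐ ω ∂μ, X (t + 1) ω = X t ω + 1 ∨ X (t + 1) ω = X t ω) (s : ℕ) :
    ∀ᵐ ω ∂μ, X (r + s) ω ≤ X r ω + s := by
  induction s with
  | zero => simp
  | succ s ih =>
    filter_upwards [ih, hstep (r + s) (Nat.le_add_right r s)] with ω hs h
    rw [← add_assoc]
    omega

theorem condExp_prod_sub_half_succ [IsFiniteMeasure μ]
    (hadp : Adapted ℱ fun t ω => (X t ω : ℝ)) {t C : ℕ} (hC : ∀ᵐ ω ∂μ, X (t + 1) ω ≤ C)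
    (hstep : ∀ᵐ ω ∂μ, X (t + 1) ω = X t ω + 1 ∨ X (t + 1) ω = X t ω)
    (htrans : μ[Set.indicator {ω | X (t + 1) ω = X t ω + 1} (fun _ => (1 : ℝ)) | ℱ t]
        =ᵐ[μ] fun ω => (2 * (X t ω : ℝ) - 1) / (2 * (t : ℝ) + 1)) (ℓ : ℕ) :
    μ[fun ω => ∏ j ∈ range ℓ, ((X (t + 1) ω : ℝ) - 1 / 2 + j) | ℱ t] =ᵐ[μ]
      fun ω => (2 * t + 2 * ℓ + 1) / (2 * t + 1) * ∏ j ∈ range ℓ, ((X t ω : ℝ) - 1 / 2 + j) := by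
  set f : ℝ → ℝ := fun x => ∏ j ∈ range ℓ, (x - 1 / 2 + j)
  have hf : Continuous f := by fun_prop
  have hXt : ∀ᵐ ω ∂μ, X t ω ≤ C := by
    filter_upwards [hC, hstep] with ω h h'
    omega
  have hmeas (s : ℕ) : Measurable fun ω => (X s ω : ℝ) := (hadp s).mono (ℱ.le s) le_rfl
  have hsm {g : ℝ → ℝ} (hg : Continuous g) : StronglyMeasurable[ℱ t] fun ω => g (X t ω) :=
    hg.comp_stronglyMeasurable (hadp t).stronglyMeasurable
  have hincr : (fun ω => (X (t + 1) ω : ℝ)) - (fun ω => (X t ω : ℝ)) =ᵐ[μ]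
      {ω | X (t + 1) ω = X t ω + 1}.indicator (fun _ => (1 : ℝ)) := by
    filter_upwards [hstep] with ω h
    rcases h with h | h <;> simp [h]
  have hlin := condExp_comp_ae_eq_of_step_zero_or_one (ℱ.le t) (f := f)
    (by filter_upwards [hstep] with ω h; rcases h with h | h <;> simp [h])
    (hsm hf) (hsm (hf.comp (continuous_add_const 1)))
    (integrable_comp_natCast_of_le hf (hmeas t) hXt)
    (integrable_comp_natCast_of_le hf (hmeas (t + 1)) hC)
    ((integrable_comp_natCast_of_le continuous_id (hmeas _) hC).sub
      (integrable_comp_natCast_of_le continuous_id (hmeas _) hXt))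
  filter_upwards [hlin, condExp_congr_ae hincr, htrans] with ω h₁ h₂ h₃
  rw [h₁, h₂, h₃]
  have key : (X t ω - 1 / 2 : ℝ) * f (X t ω + 1) = (X t ω - 1 / 2 + ℓ) * f (X t ω) :=
    mul_prod_sub_half_succ _ ℓ
  change _ = _ * f (X t ω)
  generalize f (X t ω + 1) = a, f (X t ω) = b at key ⊢
  field_simp
  linear_combination 2 * key

theorem condExp_prod_div_prod_succ [IsFiniteMeasure μ]
    (hadp : Adapted ℱ fun t ω => (X t ω : ℝ)) {t C : ℕ} (hC : ∀ᵐ ω ∂μ, X (t + 1) ω ≤ C)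
    (hstep : ∀ᵐ ω ∂μ, X (t + 1) ω = X t ω + 1 ∨ X (t + 1) ω = X t ω)
    (htrans : μ[Set.indicator {ω | X (t + 1) ω = X t ω + 1} (fun _ => (1 : ℝ)) | ℱ t]
        =ᵐ[μ] fun ω => (2 * (X t ω : ℝ) - 1) / (2 * (t : ℝ) + 1)) (ℓ : ℕ) :
    μ[fun ω => (∏ j ∈ range ℓ, ((X (t + 1) ω : ℝ) - 1 / 2 + j)) /
        ∏ j ∈ range ℓ, (2 * ((t : ℝ) + 1 + j) + 1) | ℱ t] =ᵐ[μ]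
      fun ω => (∏ j ∈ range ℓ, ((X t ω : ℝ) - 1 / 2 + j)) /
        ∏ j ∈ range ℓ, (2 * ((t : ℝ) + j) + 1) := by
  have hden := mul_prod_two_mul_add_one_succ t ℓ
  have hpos (τ : ℝ) (hτ : 0 ≤ τ) : ∏ j ∈ range ℓ, (2 * (τ + j) + 1) ≠ 0 :=
    prod_ne_zero_iff.mpr fun j _ => by positivity
  have ha := hpos (t + 1) (by positivity)
  have hb := hpos t (by positivity)
  set a := ∏ j ∈ range ℓ, (2 * ((t : ℝ) + 1 + j) + 1)
  set N : Ω → ℝ := fun ω => ∏ j ∈ range ℓ, ((X (t + 1) ω : ℝ) - 1 / 2 + j)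
  rw [show (fun ω => N ω / a) = a⁻¹ • N from funext fun ω => div_eq_inv_mul _ _]
  filter_upwards [condExp_smul a⁻¹ N (ℱ t), condExp_prod_sub_half_succ hadp hC hstep htrans ℓ]
    with ω h₁ h₂
  rw [h₁, Pi.smul_apply, h₂, smul_eq_mul]
  generalize ∏ j ∈ range ℓ, (2 * ((t : ℝ) + j) + 1) = b at *
  generalize ∏ j ∈ range ℓ, ((X t ω : ℝ) - 1 / 2 + j) = P
  field_simp
  linear_combination -P * hden

end

/-- For the size process `X(t)` of the tree rooted at a non-looping vertex `r`
(`X(r) = 1`, and `X(t+1) = X(t)+1` with conditional probability `(2X(t)-1)/(2t+1)`,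
else `X(t+1) = X(t)`), setting `Y(t) = X(t) - 1/2`, the process
`Y(t)(Y(t)+1)⋯(Y(t)+ℓ-1) / ∏_{j<ℓ} (2(t+j)+1)`, `t ≥ r`, is a martingale. -/
theorem rising_factorial_martingale_shifted
    {Ω : Type*} {m0 : MeasurableSpace Ω} (μ : Measure Ω) [IsProbabilityMeasure μ]
    (ℱ : Filtration ℕ m0) (r : ℕ) (X : ℕ → Ω → ℕ)
    (hadp : Adapted ℱ (fun t ω => (X t ω : ℝ)))
    (hinit : ∀ ω, X r ω = 1)
    (hstep : ∀ t, r ≤ t → ∀ᵐ ω ∂μ, X (t + 1) ω = X t ω + 1 ∨ X (t + 1) ω = X t ω)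
    (htrans : ∀ t, r ≤ t →
      μ[Set.indicator {ω | X (t + 1) ω = X t ω + 1} (fun _ => (1 : ℝ)) | ℱ t]
        =ᵐ[μ] fun ω => (2 * (X t ω : ℝ) - 1) / (2 * (t : ℝ) + 1))
    (ℓ : ℕ) :
    Martingale
      (fun s ω => (∏ j ∈ Finset.range ℓ, ((X (r + s) ω : ℝ) - 1 / 2 + j)) /
        ∏ j ∈ Finset.range ℓ, (2 * ((r : ℝ) + s + j) + 1))
      ⟨fun s => ℱ (r + s), fun _ _ hab => ℱ.mono (by omega), fun s => ℱ.le _⟩ μ := by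
  have hf (τ : ℝ) : Continuous fun x : ℝ => (∏ j ∈ range ℓ, (x - 1 / 2 + j)) / τ := by
    fun_prop
  have hbdd (s : ℕ) : ∀ᵐ ω ∂μ, X (r + s) ω ≤ s + 1 := by
    filter_upwards [ae_le_add_of_step hstep s] with ω h
    rw [hinit] at h
    omega
  refine martingale_nat (fun s => ?_) (fun s => ?_) (fun s => ?_)
  · exact (hf _).comp_stronglyMeasurable (hadp (r + s)).stronglyMeasurable
  · exact integrable_comp_natCast_of_le (hf _) ((hadp _).mono (ℱ.le _) le_rfl) (hbdd s)
  · have h := condExp_prod_div_prod_succ (t := r + s) hadp (hbdd (s + 1))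
      (hstep _ (r.le_add_right s)) (htrans _ (r.le_add_right s)) ℓ
    push_cast [add_assoc] at h ⊢
    exact h.symm
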